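/- arXiv:2206.07640 — 2 statements merged into one kernel-verified Lean document; each statement's English description precedes it below -/
import Mathlib

section
/- Let a, p ∈ (0, δ] with δ ∈ (0, 1/2], and let D(a‖p) = a·ln(a/p) + (1−a)·ln((1−a)/(1−p)) denote the binary KL divergence. Then a·ln(a/p) + p − a − 3δ² ≤ D(a‖p) ≤ a·ln(a/p) + p − a + 3δ². -/
/-
Only the second summand of `D(a‖p)` needs approximating. Writing
`(1 - a) log((1 - a)/(1 - p)) = (1 - a)(log(1 - a) - log(1 - p))` and using
`-x - 2x² ≤ log(1 - x) ≤ -x` for `x ≤ 1/2`, it equals `p - a` up to terms of the form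
`a²`, `ap`, `p²`, each at most `δ²`.
-/

namespace Real

theorem log_one_sub_le_neg {x : ℝ} (hx : x < 1) : log (1 - x) ≤ -x := by
  linarith [log_le_sub_one_of_pos (sub_pos.2 hx)]

theorem neg_sub_two_mul_sq_le_log_one_sub {x : ℝ} (hx : x ≤ 1 / 2) :
    -x - 2 * x ^ 2 ≤ log (1 - x) := by
  have h1x : 0 < 1 - x := by linarith
  have hinv : (1 - x)⁻¹ ≤ 1 + x + 2 * x ^ 2 := by
    rw [inv_le_iff_one_le_mul₀' h1x]
    -- `(1 - x)(1 + x + 2x²) = 1 + x²(1 - 2x)`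
    nlinarith [mul_nonneg (sq_nonneg x) (by linarith : (0 : ℝ) ≤ 1 - 2 * x)]
  linarith [one_sub_inv_le_log_of_pos h1x]

theorem abs_one_sub_mul_log_div_one_sub_sub_le {δ a p : ℝ} (hδ : δ ≤ 1 / 2)
    (ha0 : 0 ≤ a) (ha : a ≤ δ) (hp0 : 0 ≤ p) (hp : p ≤ δ) :
    |(1 - a) * log ((1 - a) / (1 - p)) - (p - a)| ≤ 3 * δ ^ 2 := by
  have ha1 : 0 < 1 - a := by linarith
  have hp1 : 0 < 1 - p := by linarith
  rw [log_div ha1.ne' hp1.ne', abs_sub_le_iff]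
  constructor
  · have hlog := sub_le_sub (log_one_sub_le_neg (x := a) (by linarith))
      (neg_sub_two_mul_sq_le_log_one_sub (x := p) (by linarith))
    nlinarith [mul_le_mul_of_nonneg_left hlog ha1.le, mul_nonneg ha0 hp0,
      mul_le_mul ha hp hp0 (ha0.trans ha), mul_self_le_mul_self hp0 hp]
  · have hlog := sub_le_sub (neg_sub_two_mul_sq_le_log_one_sub (x := a) (by linarith))
      (log_one_sub_le_neg (x := p) (by linarith))
    nlinarith [mul_le_mul_of_nonneg_left hlog ha1.le, mul_nonneg ha0 hp0,
      mul_le_mul ha hp hp0 (ha0.trans ha), mul_self_le_mul_self ha0 ha]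

end Real

theorem stmt3_general (δ a p : ℝ) (hδ : δ ≤ 1 / 2)
    (ha0 : 0 < a) (ha : a ≤ δ) (hp0 : 0 < p) (hp : p ≤ δ) :
    a * Real.log (a / p) + p - a - 3 * δ ^ 2
        ≤ a * Real.log (a / p) + (1 - a) * Real.log ((1 - a) / (1 - p)) ∧
    a * Real.log (a / p) + (1 - a) * Real.log ((1 - a) / (1 - p))
        ≤ a * Real.log (a / p) + p - a + 3 * δ ^ 2 := by
  have h := Real.abs_one_sub_mul_log_div_one_sub_sub_le hδ ha0.le ha hp0.le hp
  rw [abs_sub_le_iff] at h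
  constructor <;> linarith [h.1, h.2]

/-- Two-sided approximation of the binary KL divergence
`D(a‖p) = a·ln(a/p) + (1−a)·ln((1−a)/(1−p))` for `a, p ∈ (0, δ]`, `δ ∈ (0, 1/2]`. -/
theorem stmt3 (δ a p : ℝ) (hδ0 : 0 < δ) (hδ : δ ≤ 1 / 2)
    (ha0 : 0 < a) (ha : a ≤ δ) (hp0 : 0 < p) (hp : p ≤ δ) :
    a * Real.log (a / p) + p - a - 3 * δ ^ 2
        ≤ a * Real.log (a / p) + (1 - a) * Real.log ((1 - a) / (1 - p)) ∧
    a * Real.log (a / p) + (1 - a) * Real.log ((1 - a) / (1 - p))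
        ≤ a * Real.log (a / p) + p - a + 3 * δ ^ 2 :=
  stmt3_general δ a p hδ ha0 ha hp0 hp
end

section
/- Let P (= P_n) and Q (= Q_n) be distributions on ℝ^p, let A be an event with P(A) = 1 − o(1), and set P̃ = P|A. If there exists D such that χ²_{≤D}(P̃ ‖ Q) = O(1), then no polynomial f of degree ≤ D strongly separates P and Q, i.e. it cannot hold that sqrt(max{Var_P f, Var_Q f}) = o(|E_P f − E_Q f|). If χ²_{≤D}(P̃ ‖ Q) = o(1), then no degree-≤D polynomial weakly separates P and Q. -/
/-!
Normalise a separating polynomial `f` to `h = f - E_Q f`, so that `E_Q h = 0` and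
`E_P h = Δ := E_P f - E_Q f`. Since `L̃ - L̃^{≤D}` is `Q`-orthogonal to `h` and to `1`,
`E_{P̃} h = E_Q[L̃^{≤D} h] = E_Q[(L̃^{≤D} - 1) h]`, which Cauchy–Schwarz bounds by
`√(χ²_{≤D}) · √(Var_Q f)`. On the other hand `P(A) E_{P̃} h = E_P[h 1_A]` differs from `Δ` by
`E_P[h 1_{Aᶜ}]`, which Cauchy–Schwarz bounds by `√(P(Aᶜ)) · √(E_P h²) = o(|Δ|)` whenever
`Var_P f = O(Δ²)`. Comparing the two, `(1 - o(1)) |Δ| ≤ √(χ²_{≤D}) · √(Var_Q f)`, which is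
incompatible with either kind of separation.
-/

open Filter

/-- The subspace of functions `{0,1}^p → ℝ` that are polynomials of degree at most `D`
(spanned by multilinear monomials on at most `D` coordinates). -/
def degLE (p D : ℕ) : Submodule ℝ ((Fin p → Bool) → ℝ) :=
  Submodule.span ℝ {f | ∃ S : Finset (Fin p), S.card ≤ D ∧
    f = fun x => ∏ i ∈ S, (if x i then (1 : ℝ) else 0)}

open Finset

lemma abs_sum_mul_mul_le_sqrt_mul_sqrt {ι : Type*} (s : Finset ι) {w : ι → ℝ}
    (hw : ∀ i ∈ s, 0 ≤ w i) (u v : ι → ℝ) :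
    |∑ i ∈ s, w i * u i * v i| ≤ √(∑ i ∈ s, w i * u i ^ 2) * √(∑ i ∈ s, w i * v i ^ 2) := by
  have hwu : ∀ i ∈ s, 0 ≤ w i * u i ^ 2 := fun i hi => mul_nonneg (hw i hi) (sq_nonneg _)
  have hwv : ∀ i ∈ s, 0 ≤ w i * v i ^ 2 := fun i hi => mul_nonneg (hw i hi) (sq_nonneg _)
  rw [← Real.sqrt_mul (sum_nonneg hwu)]
  exact Real.abs_le_sqrt <|
    sum_sq_le_sum_mul_sum_of_sq_le_mul s hwu hwv fun i _ => le_of_eq (by ring)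

section WeightedSums

variable {X : Type*} [Fintype X] {w : X → ℝ}

lemma sum_mul_sub_const (hw : ∑ x, w x = 1) (f : X → ℝ) (b : ℝ) :
    ∑ x, w x * (f x - b) = ∑ x, w x * f x - b := by
  simp only [mul_sub, sum_sub_distrib, ← sum_mul, hw, one_mul]

lemma sum_mul_sub_const_sq (hw : ∑ x, w x = 1) (f : X → ℝ) (b : ℝ) :
    ∑ x, w x * (f x - b) ^ 2 = ∑ x, w x * f x ^ 2 - 2 * b * ∑ x, w x * f x + b ^ 2 := by
  have expand : ∀ x, w x * (f x - b) ^ 2 = w x * f x ^ 2 - 2 * b * (w x * f x) + b ^ 2 * w x :=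
    fun x => by ring
  simp only [expand, sum_add_distrib, sum_sub_distrib, ← mul_sum, hw, mul_one]

lemma abs_sum_mul_mul_le_sqrt_sub_one_mul_sqrt (hw : ∀ x, 0 ≤ w x) (hw1 : ∑ x, w x = 1)
    {L h : X → ℝ} (hL : ∑ x, w x * L x = 1) (hh : ∑ x, w x * h x = 0) :
    |∑ x, w x * L x * h x| ≤ √(∑ x, w x * L x ^ 2 - 1) * √(∑ x, w x * h x ^ 2) := by
  have centre : ∑ x, w x * L x * h x = ∑ x, w x * (L x - 1) * h x := by
    simp only [mul_sub, sub_mul, mul_one, sum_sub_distrib, hh, sub_zero]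
  have variance : ∑ x, w x * L x ^ 2 - 1 = ∑ x, w x * (L x - 1) ^ 2 := by
    rw [sum_mul_sub_const_sq hw1, hL]
    ring
  rw [centre, variance]
  exact abs_sum_mul_mul_le_sqrt_mul_sqrt univ (fun x _ => hw x) _ _

lemma sum_cond_mul [DecidableEq X] {P Pt : X → ℝ} {A : Finset X}
    (hPt : ∀ x, Pt x = (if x ∈ A then P x else 0) / ∑ y ∈ A, P y) (h : X → ℝ) :
    ∑ x, Pt x * h x = (∑ x ∈ A, P x * h x) / ∑ x ∈ A, P x := by
  simp only [hPt, div_mul_eq_mul_div, ite_mul, zero_mul, ← sum_div, sum_ite_mem, univ_inter]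

lemma abs_sum_compl_mul_le [DecidableEq X] {P : X → ℝ} (hP : ∀ x, 0 ≤ P x)
    (hP1 : ∑ x, P x = 1) (A : Finset X) (h : X → ℝ) :
    |∑ x ∈ Aᶜ, P x * h x| ≤ √(1 - ∑ x ∈ A, P x) * √(∑ x, P x * h x ^ 2) := by
  have mass_compl : ∑ x ∈ Aᶜ, P x = 1 - ∑ x ∈ A, P x := by
    rw [← hP1, ← sum_add_sum_compl A P]
    ring
  calc |∑ x ∈ Aᶜ, P x * h x| = |∑ x ∈ Aᶜ, P x * 1 * h x| := by simp only [mul_one]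
    _ ≤ √(∑ x ∈ Aᶜ, P x * 1 ^ 2) * √(∑ x ∈ Aᶜ, P x * h x ^ 2) :=
      abs_sum_mul_mul_le_sqrt_mul_sqrt _ (fun x _ => hP x) _ _
    _ ≤ √(1 - ∑ x ∈ A, P x) * √(∑ x, P x * h x ^ 2) := by
      rw [one_pow, funext fun x => mul_one (P x), mass_compl]
      exact mul_le_mul_of_nonneg_left (Real.sqrt_le_sqrt <|
        sum_le_univ_sum_of_nonneg fun x => mul_nonneg (hP x) (sq_nonneg _)) (Real.sqrt_nonneg _)

lemma abs_sum_sub_le_abs_sum_cond [DecidableEq X] {P Pt : X → ℝ} (hP : ∀ x, 0 ≤ P x)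
    (hP1 : ∑ x, P x = 1) {A : Finset X} (hA : 0 < ∑ x ∈ A, P x)
    (hPt : ∀ x, Pt x = (if x ∈ A then P x else 0) / ∑ y ∈ A, P y) (h : X → ℝ) :
    |∑ x, P x * h x| - √(1 - ∑ x ∈ A, P x) * √(∑ x, P x * h x ^ 2) ≤ |∑ x, Pt x * h x| := by
  have hA1 : ∑ x ∈ A, P x ≤ 1 := hP1 ▸ sum_le_univ_sum_of_nonneg hP
  have split : (∑ x ∈ A, P x) * ∑ x, Pt x * h x = ∑ x, P x * h x - ∑ x ∈ Aᶜ, P x * h x := by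
    rw [sum_cond_mul hPt, mul_div_cancel₀ _ hA.ne', ← sum_add_sum_compl A]
    ring
  calc |∑ x, P x * h x| - √(1 - ∑ x ∈ A, P x) * √(∑ x, P x * h x ^ 2)
      ≤ |∑ x, P x * h x| - |∑ x ∈ Aᶜ, P x * h x| := by
        gcongr
        exact abs_sum_compl_mul_le hP hP1 A h
    _ ≤ |(∑ x ∈ A, P x) * ∑ x, Pt x * h x| := split ▸ abs_sub_abs_le_abs_sub _ _
    _ ≤ |∑ x, Pt x * h x| := by
      rw [abs_mul, abs_of_pos hA]
      exact mul_le_of_le_one_left (abs_nonneg _) hA1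

lemma sqrt_sum_mul_sub_sq_le (hw1 : ∑ x, w x = 1) {f : X → ℝ} {b c : ℝ}
    (hvar : √(∑ x, w x * (f x - ∑ y, w y * f y) ^ 2) ≤ c * |∑ x, w x * f x - b|) :
    √(∑ x, w x * (f x - b) ^ 2) ≤ √(1 + c ^ 2) * |∑ x, w x * f x - b| := by
  set m := ∑ x, w x * f x
  have bias_variance : ∑ x, w x * (f x - b) ^ 2 = ∑ x, w x * (f x - m) ^ 2 + (m - b) ^ 2 := by
    simp only [sum_mul_sub_const_sq hw1]
    ring
  have hvar' : ∑ x, w x * (f x - m) ^ 2 ≤ c ^ 2 * (m - b) ^ 2 := by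
    rw [← sq_abs (m - b), ← mul_pow]
    exact (Real.sqrt_le_left ((Real.sqrt_nonneg _).trans hvar)).mp hvar
  rw [← Real.sqrt_sq (abs_nonneg (m - b)), ← Real.sqrt_mul (by positivity), sq_abs,
    bias_variance]
  gcongr
  linarith

lemma sum_mul_eq_sum_mul_of_proj {Q Pt Lt LD : X → ℝ} (hLt : ∀ x, Pt x = Lt x * Q x)
    {V : Submodule ℝ (X → ℝ)} (hproj : ∀ g ∈ V, ∑ x, Q x * (Lt x - LD x) * g x = 0)
    {g : X → ℝ} (hg : g ∈ V) :
    ∑ x, Pt x * g x = ∑ x, Q x * LD x * g x := by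
  have := hproj g hg
  simp only [mul_sub, sub_mul, sum_sub_distrib, sub_eq_zero] at this
  rw [← this]
  exact sum_congr rfl fun x _ => by rw [hLt]; ring

theorem one_sub_le_sqrt_chiSq_mul [DecidableEq X] {P Q Pt Lt LD f : X → ℝ}
    (hP : ∀ x, 0 ≤ P x) (hP1 : ∑ x, P x = 1) (hQ : ∀ x, 0 ≤ Q x) (hQ1 : ∑ x, Q x = 1)
    {A : Finset X} (hA : 0 < ∑ x ∈ A, P x)
    (hPt : ∀ x, Pt x = (if x ∈ A then P x else 0) / ∑ y ∈ A, P y)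
    (hLt : ∀ x, Pt x = Lt x * Q x) {V : Submodule ℝ (X → ℝ)} (hV1 : (fun _ => 1) ∈ V)
    (hproj : ∀ g ∈ V, ∑ x, Q x * (Lt x - LD x) * g x = 0) (hf : f ∈ V) {c : ℝ}
    (hΔ : 0 < |(∑ x, P x * f x) - (∑ x, Q x * f x)|)
    (hsep : √(max (∑ x, P x * (f x - ∑ y, P y * f y) ^ 2)
                  (∑ x, Q x * (f x - ∑ y, Q y * f y) ^ 2))
      ≤ c * |(∑ x, P x * f x) - (∑ x, Q x * f x)|) :
    1 - √(1 - ∑ x ∈ A, P x) * √(1 + c ^ 2) ≤ √(∑ x, Q x * LD x ^ 2 - 1) * c := by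
  set mP := ∑ x, P x * f x
  set mQ := ∑ x, Q x * f x
  set h : X → ℝ := fun x => f x - mQ
  have hQh2 : √(∑ x, Q x * h x ^ 2) ≤ c * |mP - mQ| :=
    (Real.sqrt_le_sqrt (le_max_right _ _)).trans hsep
  have hPh2 : √(∑ x, P x * h x ^ 2) ≤ √(1 + c ^ 2) * |mP - mQ| :=
    sqrt_sum_mul_sub_sq_le hP1 ((Real.sqrt_le_sqrt (le_max_left _ _)).trans hsep)
  have hQLD : ∑ x, Q x * LD x = 1 := by
    have hPt1 := sum_cond_mul hPt fun _ => 1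
    simp only [mul_one, div_self hA.ne'] at hPt1
    simpa [hPt1] using (sum_mul_eq_sum_mul_of_proj hLt hproj hV1).symm
  have hPth : ∑ x, Pt x * h x = ∑ x, Q x * LD x * h x := by
    refine sum_mul_eq_sum_mul_of_proj hLt hproj ?_
    convert V.sub_mem hf (V.smul_mem mQ hV1) using 1
    funext x
    simp [h]
  have upper : |∑ x, Pt x * h x| ≤ √(∑ x, Q x * LD x ^ 2 - 1) * (c * |mP - mQ|) := by
    rw [hPth]
    refine (abs_sum_mul_mul_le_sqrt_sub_one_mul_sqrt hQ hQ1 hQLD ?_).trans (by gcongr)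
    exact (sum_mul_sub_const hQ1 f mQ).trans (sub_self mQ)
  have lower := abs_sum_sub_le_abs_sum_cond hP hP1 hA hPt h
  rw [show ∑ x, P x * h x = mP - mQ from sum_mul_sub_const hP1 f mQ] at lower
  refine le_of_mul_le_mul_right ?_ hΔ
  calc (1 - √(1 - ∑ x ∈ A, P x) * √(1 + c ^ 2)) * |mP - mQ|
      ≤ |mP - mQ| - √(1 - ∑ x ∈ A, P x) * √(∑ x, P x * h x ^ 2) := by
        rw [sub_mul, one_mul, mul_assoc]
        gcongr
    _ ≤ √(∑ x, Q x * LD x ^ 2 - 1) * c * |mP - mQ| := by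
        rw [mul_assoc]
        exact lower.trans upper

end WeightedSums

lemma tendsto_one_sub_sqrt_one_sub_mul {a : ℕ → ℝ} (ha : Tendsto a atTop (nhds 1)) (C : ℝ) :
    Tendsto (fun n => 1 - √(1 - a n) * C) atTop (nhds 1) := by
  simpa using ((ha.const_sub 1).sqrt.mul_const C).const_sub 1

theorem stmt14_general (p : ℕ → ℕ) (P Q : ∀ n, (Fin (p n) → Bool) → ℝ)
    (hPpos : ∀ n x, 0 ≤ P n x) (hP1 : ∀ n, ∑ x, P n x = 1)
    (hQpos : ∀ n x, 0 ≤ Q n x) (hQ1 : ∀ n, ∑ x, Q n x = 1)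
    (A : ∀ n, Finset (Fin (p n) → Bool))
    (hApos : ∀ n, 0 < ∑ x ∈ A n, P n x)
    (hA : Tendsto (fun n => ∑ x ∈ A n, P n x) atTop (nhds 1))
    (D : ℕ → ℕ)
    (Pt : ∀ n, (Fin (p n) → Bool) → ℝ)
    (hPt : ∀ n x, Pt n x = (if x ∈ A n then P n x else 0) / ∑ y ∈ A n, P n y)
    (Lt : ∀ n, (Fin (p n) → Bool) → ℝ)
    (hLt : ∀ n x, Pt n x = Lt n x * Q n x)
    (LD : ∀ n, (Fin (p n) → Bool) → ℝ)
    (hproj : ∀ n, ∀ f ∈ degLE (p n) (D n),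
      ∑ x, Q n x * (Lt n x - LD n x) * f x = 0) :
    -- O(1) bound rules out strong separation
    ((∃ C : ℝ, ∀ n, (∑ x, Q n x * LD n x ^ 2) - 1 ≤ C) →
      ¬ ∃ f : ∀ n, (Fin (p n) → Bool) → ℝ,
        (∀ n, f n ∈ degLE (p n) (D n)) ∧
        (∀ᶠ n in atTop,
          0 < |(∑ x, P n x * f n x) - (∑ x, Q n x * f n x)|) ∧
        ∀ ε : ℝ, 0 < ε → ∀ᶠ n in atTop,
          Real.sqrt (max (∑ x, P n x * (f n x - ∑ y, P n y * f n y) ^ 2)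
                         (∑ x, Q n x * (f n x - ∑ y, Q n y * f n y) ^ 2))
            ≤ ε * |(∑ x, P n x * f n x) - (∑ x, Q n x * f n x)|) ∧
    -- o(1) bound rules out weak separation
    (Tendsto (fun n => (∑ x, Q n x * LD n x ^ 2) - 1) atTop (nhds 0) →
      ¬ ∃ f : ∀ n, (Fin (p n) → Bool) → ℝ,
        (∀ n, f n ∈ degLE (p n) (D n)) ∧
        (∀ᶠ n in atTop,
          0 < |(∑ x, P n x * f n x) - (∑ x, Q n x * f n x)|) ∧
        ∃ C : ℝ, 0 < C ∧ ∀ᶠ n in atTop,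
          Real.sqrt (max (∑ x, P n x * (f n x - ∑ y, P n y * f n y) ^ 2)
                         (∑ x, Q n x * (f n x - ∑ y, Q n y * f n y) ^ 2))
            ≤ C * |(∑ x, P n x * f n x) - (∑ x, Q n x * f n x)|) := by
  have hone : ∀ n, (fun _ => (1 : ℝ)) ∈ degLE (p n) (D n) := fun n =>
    Submodule.subset_span ⟨∅, Nat.zero_le _, by simp⟩
  have bound : ∀ (f : ∀ n, (Fin (p n) → Bool) → ℝ) (c : ℝ), (∀ n, f n ∈ degLE (p n) (D n)) →
      (∀ᶠ n in atTop, 0 < |(∑ x, P n x * f n x) - (∑ x, Q n x * f n x)|) →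
      (∀ᶠ n in atTop,
          Real.sqrt (max (∑ x, P n x * (f n x - ∑ y, P n y * f n y) ^ 2)
                         (∑ x, Q n x * (f n x - ∑ y, Q n y * f n y) ^ 2))
            ≤ c * |(∑ x, P n x * f n x) - (∑ x, Q n x * f n x)|) →
      ∀ᶠ n in atTop, 1 - √(1 - ∑ x ∈ A n, P n x) * √(1 + c ^ 2)
        ≤ √(∑ x, Q n x * LD n x ^ 2 - 1) * c := fun f c hf hΔ hsep => by
    filter_upwards [hΔ, hsep] with n hΔn hsepn
    exact one_sub_le_sqrt_chiSq_mul (hPpos n) (hP1 n) (hQpos n) (hQ1 n) (hApos n) (hPt n)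
      (hLt n) (hone n) (hproj n) (hf n) hΔn hsepn
  constructor
  · rintro ⟨C, hC⟩ ⟨f, hf, hΔ, hsep⟩
    have key : ∀ ε > 0, 1 ≤ √C * ε := fun ε hε =>
      le_of_tendsto (tendsto_one_sub_sqrt_one_sub_mul hA _) <|
        (bound f ε hf hΔ (hsep ε hε)).mono fun n hn => hn.trans (by gcongr; exact hC n)
    have := key (1 / (√C + 1)) (by positivity)
    rw [mul_one_div, le_div_iff₀ (by positivity)] at this
    linarith
  · rintro hχ ⟨f, hf, hΔ, C, -, hsep⟩
    have := le_of_tendsto_of_tendsto (tendsto_one_sub_sqrt_one_sub_mul hA _)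
      (hχ.sqrt.mul_const C) (bound f C hf hΔ hsep)
    norm_num at this

/-- Conditional low-degree lower bound (Lemma `lem:ld-cond`): if the degree-`D`
chi-squared divergence of the conditioned planted distribution `P̃ = P|A` from `Q`
is `O(1)` (resp. `o(1)`), then no degree-`≤D` polynomial strongly (resp. weakly)
separates `P` and `Q`. Here `Lt` is the likelihood ratio `dP̃/dQ` and `LD` its
orthogonal projection onto degree-`≤D` polynomials. -/
theorem stmt14 (p : ℕ → ℕ) (P Q : ∀ n, (Fin (p n) → Bool) → ℝ)
    (hPpos : ∀ n x, 0 ≤ P n x) (hP1 : ∀ n, ∑ x, P n x = 1)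
    (hQpos : ∀ n x, 0 ≤ Q n x) (hQ1 : ∀ n, ∑ x, Q n x = 1)
    (A : ∀ n, Finset (Fin (p n) → Bool))
    (hApos : ∀ n, 0 < ∑ x ∈ A n, P n x)
    (hA : Tendsto (fun n => ∑ x ∈ A n, P n x) atTop (nhds 1))
    (D : ℕ → ℕ)
    (Pt : ∀ n, (Fin (p n) → Bool) → ℝ)
    (hPt : ∀ n x, Pt n x = (if x ∈ A n then P n x else 0) / ∑ y ∈ A n, P n y)
    (Lt : ∀ n, (Fin (p n) → Bool) → ℝ)
    (hLt : ∀ n x, Pt n x = Lt n x * Q n x)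
    (LD : ∀ n, (Fin (p n) → Bool) → ℝ)
    (hLD : ∀ n, LD n ∈ degLE (p n) (D n))
    (hproj : ∀ n, ∀ f ∈ degLE (p n) (D n),
      ∑ x, Q n x * (Lt n x - LD n x) * f x = 0) :
    -- O(1) bound rules out strong separation
    ((∃ C : ℝ, ∀ n, (∑ x, Q n x * LD n x ^ 2) - 1 ≤ C) →
      ¬ ∃ f : ∀ n, (Fin (p n) → Bool) → ℝ,
        (∀ n, f n ∈ degLE (p n) (D n)) ∧
        (∀ᶠ n in atTop,
          0 < |(∑ x, P n x * f n x) - (∑ x, Q n x * f n x)|) ∧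
        ∀ ε : ℝ, 0 < ε → ∀ᶠ n in atTop,
          Real.sqrt (max (∑ x, P n x * (f n x - ∑ y, P n y * f n y) ^ 2)
                         (∑ x, Q n x * (f n x - ∑ y, Q n y * f n y) ^ 2))
            ≤ ε * |(∑ x, P n x * f n x) - (∑ x, Q n x * f n x)|) ∧
    -- o(1) bound rules out weak separation
    (Tendsto (fun n => (∑ x, Q n x * LD n x ^ 2) - 1) atTop (nhds 0) →
      ¬ ∃ f : ∀ n, (Fin (p n) → Bool) → ℝ,
        (∀ n, f n ∈ degLE (p n) (D n)) ∧
        (∀ᶠ n in atTop,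
          0 < |(∑ x, P n x * f n x) - (∑ x, Q n x * f n x)|) ∧
        ∃ C : ℝ, 0 < C ∧ ∀ᶠ n in atTop,
          Real.sqrt (max (∑ x, P n x * (f n x - ∑ y, P n y * f n y) ^ 2)
                         (∑ x, Q n x * (f n x - ∑ y, Q n y * f n y) ^ 2))
            ≤ C * |(∑ x, P n x * f n x) - (∑ x, Q n x * f n x)|) :=
  stmt14_general p P Q hPpos hP1 hQpos hQ1 A hApos hA D Pt hPt Lt hLt LD hproj
end
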